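/- Let β, κ, γ > 0 and for ω > 0 let α(ω) = (β/κ)^{1/4}·(ω² − i(γ/β)ω)^{1/4} ∈ ℂ, where z^{1/4} = exp((1/4)·Log z) denotes the principal fourth root. Define C_{2,ω} = cos(α(ω))/(sinh(α(ω)) + sin(α(ω))) − [(1 + cosh(α(ω))cos(α(ω)) + sinh(α(ω))sin(α(ω)))/(2 + 2·cosh(α(ω))cos(α(ω)))]·[(cosh(α(ω)) + cos(α(ω)))/(sinh(α(ω)) + sin(α(ω)))]. Then there exist ω₀ > 0 and M > 0 such that for all ω ≥ ω₀ all denominators in the definition of C_{2,ω} are nonzero and |C_{2,ω}| ≤ M·√ω. -/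

import Mathlib

/-- The characteristic wavenumber `α(ω) = (β/κ)^{1/4}·(ω² − i(γ/β)ω)^{1/4}`, where
`z^{1/4} = exp((1/4)·Log z)` is the principal fourth root. -/
noncomputable def alphaWN (β κ γ ω : ℝ) : ℂ :=
  ((β / κ) ^ ((1:ℝ)/4) : ℝ) *
    Complex.exp ((1/4 : ℂ) * Complex.log ((ω:ℂ) ^ 2 - Complex.I * ((γ:ℂ) / (β:ℂ)) * (ω:ℂ)))

/-- The coefficient `C_{2,ω}` appearing in the closed-form transfer function of the beam. -/
noncomputable def C2coef (β κ γ ω : ℝ) : ℂ :=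
  Complex.cos (alphaWN β κ γ ω) /
      (Complex.sinh (alphaWN β κ γ ω) + Complex.sin (alphaWN β κ γ ω)) -
    ((1 + Complex.cosh (alphaWN β κ γ ω) * Complex.cos (alphaWN β κ γ ω) +
        Complex.sinh (alphaWN β κ γ ω) * Complex.sin (alphaWN β κ γ ω)) /
      (2 + 2 * Complex.cosh (alphaWN β κ γ ω) * Complex.cos (alphaWN β κ γ ω))) *
    ((Complex.cosh (alphaWN β κ γ ω) + Complex.cos (alphaWN β κ γ ω)) /
      (Complex.sinh (alphaWN β κ γ ω) + Complex.sin (alphaWN β κ γ ω)))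

/-!
Write `z = α(ω) = x + iy`. Factoring `ω²` out of `ω² - i(γ/β)ω` gives
`α(ω) = (β/κ)^{1/4} √ω (1 - iε)^{1/4}` with `ε = γ/(βω)`, so `x ≍ √ω` while `|y| ≍ 1/√ω`.
The moduli of `sin z, cos z, sinh z, cosh z` are squeezed between hyperbolic functions of `x`
and `y` (e.g. `‖cos z‖² = cos² x + sinh² y`). Hence `sinh z + sin z` and `cosh z + cos z` are of
size `sinh x`, the numerator `1 + cosh z cos z + sinh z sin z` is `O(sinh x)`, and
`‖1 + cosh z cos z‖ ≥ sinh x · |sinh y| - 1 ≳ sinh x · |y|`, which is large because `sinh x`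
grows exponentially in `√ω` while `|y|` decays only like `1/√ω`. So `C_{2,ω} = O(1 + 1/|y|)`.
-/

namespace Complex

lemma sq_norm_sin (z : ℂ) : ‖sin z‖ ^ 2 = Real.sin z.re ^ 2 + Real.sinh z.im ^ 2 := by
  rw [← normSq_eq_norm_sq, sin_eq, normSq_apply]
  simp only [add_re, add_im, mul_re, mul_im, ← ofReal_sin, ← ofReal_cos, ← ofReal_sinh,
    ← ofReal_cosh, ofReal_re, ofReal_im, I_re, I_im]
  nlinarith [Real.cosh_sq z.im, Real.sin_sq_add_cos_sq z.re]

lemma sq_norm_cos (z : ℂ) : ‖cos z‖ ^ 2 = Real.cos z.re ^ 2 + Real.sinh z.im ^ 2 := by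
  rw [← normSq_eq_norm_sq, cos_eq, normSq_apply]
  simp only [sub_re, sub_im, mul_re, mul_im, ← ofReal_sin, ← ofReal_cos, ← ofReal_sinh,
    ← ofReal_cosh, ofReal_re, ofReal_im, I_re, I_im]
  nlinarith [Real.cosh_sq z.im, Real.sin_sq_add_cos_sq z.re]

lemma sq_norm_sinh (z : ℂ) : ‖sinh z‖ ^ 2 = Real.sinh z.re ^ 2 + Real.sin z.im ^ 2 := by
  have h : ‖sinh z‖ = ‖sin (z * I)‖ := by rw [sin_mul_I, norm_mul, norm_I, mul_one]
  rw [h, sq_norm_sin, mul_I_re, mul_I_im, Real.sin_neg, neg_sq, add_comm]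

lemma sq_norm_cosh (z : ℂ) : ‖cosh z‖ ^ 2 = Real.sinh z.re ^ 2 + Real.cos z.im ^ 2 := by
  rw [← cos_mul_I, sq_norm_cos, mul_I_re, mul_I_im, Real.cos_neg, add_comm]

lemma norm_sin_le_cosh_im (z : ℂ) : ‖sin z‖ ≤ Real.cosh z.im := by
  rw [← sq_le_sq₀ (norm_nonneg _) (Real.cosh_pos _).le, sq_norm_sin, Real.cosh_sq]
  nlinarith [Real.sin_sq_le_one z.re]

lemma norm_cos_le_cosh_im (z : ℂ) : ‖cos z‖ ≤ Real.cosh z.im := by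
  rw [← sq_le_sq₀ (norm_nonneg _) (Real.cosh_pos _).le, sq_norm_cos, Real.cosh_sq]
  nlinarith [Real.cos_sq_le_one z.re]

lemma norm_sinh_le_cosh_re (z : ℂ) : ‖sinh z‖ ≤ Real.cosh z.re := by
  rw [← sq_le_sq₀ (norm_nonneg _) (Real.cosh_pos _).le, sq_norm_sinh, Real.cosh_sq]
  nlinarith [Real.sin_sq_le_one z.im]

lemma norm_cosh_le_cosh_re (z : ℂ) : ‖cosh z‖ ≤ Real.cosh z.re := by
  rw [← sq_le_sq₀ (norm_nonneg _) (Real.cosh_pos _).le, sq_norm_cosh, Real.cosh_sq]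
  nlinarith [Real.cos_sq_le_one z.im]

lemma abs_sinh_re_le_norm_sinh (z : ℂ) : |Real.sinh z.re| ≤ ‖sinh z‖ := by
  rw [← abs_norm, ← sq_le_sq, sq_norm_sinh]
  nlinarith [sq_nonneg (Real.sin z.im)]

lemma abs_sinh_re_le_norm_cosh (z : ℂ) : |Real.sinh z.re| ≤ ‖cosh z‖ := by
  rw [← abs_norm, ← sq_le_sq, sq_norm_cosh]
  nlinarith [sq_nonneg (Real.cos z.im)]

lemma abs_sinh_im_le_norm_cos (z : ℂ) : |Real.sinh z.im| ≤ ‖cos z‖ := by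
  rw [← abs_norm, ← sq_le_sq, sq_norm_cos]
  nlinarith [sq_nonneg (Real.cos z.re)]

lemma abs_sinh_re_sub_cosh_im_le_norm_sinh_add_sin (z : ℂ) :
    |Real.sinh z.re| - Real.cosh z.im ≤ ‖sinh z + sin z‖ := by
  have := norm_sub_norm_le (sinh z) (-sin z)
  rw [norm_neg, sub_neg_eq_add] at this
  linarith [abs_sinh_re_le_norm_sinh z, norm_sin_le_cosh_im z]

lemma abs_sinh_re_mul_abs_sinh_im_sub_one_le_norm_one_add_cosh_mul_cos (z : ℂ) :
    |Real.sinh z.re| * |Real.sinh z.im| - 1 ≤ ‖1 + cosh z * cos z‖ := by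
  have := norm_sub_norm_le (cosh z * cos z) (-1)
  rw [norm_neg, norm_one, sub_neg_eq_add, add_comm, norm_mul] at this
  have := mul_le_mul (abs_sinh_re_le_norm_cosh z) (abs_sinh_im_le_norm_cos z) (abs_nonneg _)
    (norm_nonneg _)
  linarith

lemma norm_one_add_cosh_mul_cos_add_sinh_mul_sin_le (z : ℂ) :
    ‖1 + cosh z * cos z + sinh z * sin z‖ ≤ 1 + 2 * Real.cosh z.re * Real.cosh z.im := by
  have := norm_add₃_le (a := 1) (b := cosh z * cos z) (c := sinh z * sin z)
  rw [norm_one, norm_mul, norm_mul] at this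
  have := mul_le_mul (norm_cosh_le_cosh_re z) (norm_cos_le_cosh_im z) (norm_nonneg _)
    (Real.cosh_pos _).le
  have := mul_le_mul (norm_sinh_le_cosh_re z) (norm_sin_le_cosh_im z) (norm_nonneg _)
    (Real.cosh_pos _).le
  linarith

end Complex

section

open Real

lemma Real.sq_div_four_le_sinh {x : ℝ} (hx : 0 ≤ x) : x ^ 2 / 4 ≤ sinh x := by
  rw [sinh_eq]
  linarith [quadratic_le_exp_of_nonneg hx, exp_le_one_iff.2 (neg_nonpos.2 hx)]

lemma Real.abs_sin_div_two_pi_le_abs_sin_div_four {θ : ℝ} (hθ : |θ| ≤ π / 2) :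
    |sin θ| / (2 * π) ≤ |sin (θ / 4)| := by
  have hθ4 : |θ / 4| = |θ| / 4 := by rw [abs_div]; norm_num
  rw [abs_sin_eq_sin_abs_of_abs_le_pi (x := θ / 4) (by rw [hθ4]; linarith [pi_pos]), hθ4]
  calc |sin θ| / (2 * π) ≤ 2 / π * (|θ| / 4) := by
        rw [div_le_iff₀ (by positivity)]
        field_simp
        linarith [abs_sin_le_abs (x := θ)]
    _ ≤ sin (|θ| / 4) := mul_le_sin (by positivity) (by linarith [pi_pos])

lemma Real.abs_sin_div_four_le {θ : ℝ} (hθ : |θ| ≤ π / 2) :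
    |sin (θ / 4)| ≤ π / 8 * |sin θ| := by
  have hJordan : 2 / π * |θ| ≤ |sin θ| := by
    rw [abs_sin_eq_sin_abs_of_abs_le_pi (by linarith [pi_pos])]
    exact mul_le_sin (abs_nonneg θ) hθ
  calc |sin (θ / 4)| ≤ |θ / 4| := abs_sin_le_abs
    _ = π / 8 * (2 / π * |θ|) := by rw [abs_div]; field_simp; norm_num; ring
    _ ≤ π / 8 * |sin θ| := by gcongr

end

section

open Complex

theorem one_sub_mul_I_cpow_quarter_bounds {ε : ℝ} (hε : 0 < ε) (hε1 : ε ≤ 1) :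
    1 / 2 ≤ ((1 - ε * I) ^ (1 / 4 : ℂ)).re ∧
      ε / (4 * Real.pi) ≤ |((1 - ε * I) ^ (1 / 4 : ℂ)).im| ∧
      |((1 - ε * I) ^ (1 / 4 : ℂ)).im| ≤ Real.pi / 4 * ε := by
  set v : ℂ := 1 - ε * I
  have hre : v.re = 1 := by simp [v]
  have him : v.im = -ε := by simp [v]
  have hv0 : v ≠ 0 := fun h => by simp [h] at hre
  have hnorm1 : 1 ≤ ‖v‖ := hre ▸ re_le_norm v
  have hnorm2 : ‖v‖ ≤ 2 := by
    have := norm_le_abs_re_add_abs_im v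
    rw [hre, him, abs_neg, abs_of_pos hε] at this
    norm_num at this
    linarith
  set ρ := Real.exp (Real.log ‖v‖ / 4)
  have hρ1 : 1 ≤ ρ := Real.one_le_exp (by have := Real.log_nonneg hnorm1; positivity)
  have hρ2 : ρ ≤ 2 := by
    calc ρ ≤ Real.exp (Real.log 2) := by
          refine Real.exp_le_exp.2 ?_
          linarith [Real.log_le_log (by positivity) hnorm2, Real.log_nonneg (one_le_two (α := ℝ))]
      _ = 2 := Real.exp_log two_pos
  have hθ : |arg v| ≤ Real.pi / 2 := abs_arg_le_pi_div_two_iff.2 (by rw [hre]; norm_num)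
  have hsin : |Real.sin (arg v)| = ε / ‖v‖ := by
    rw [sin_arg, him, abs_div, abs_neg, abs_of_pos hε, abs_norm]
  have hu_re : (v ^ (1 / 4 : ℂ)).re = ρ * Real.cos (arg v / 4) := by
    rw [cpow_def_of_ne_zero hv0, exp_re]
    simp [ρ, log_re, log_im, div_eq_mul_inv]
  have hu_im : (v ^ (1 / 4 : ℂ)).im = ρ * Real.sin (arg v / 4) := by
    rw [cpow_def_of_ne_zero hv0, exp_im]
    simp [ρ, log_re, log_im, div_eq_mul_inv]
  have hcos : 1 / 2 ≤ Real.cos (arg v / 4) := by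
    have h := Real.one_sub_sq_div_two_le_cos (x := arg v / 4)
    have : (arg v / 4) ^ 2 ≤ 1 := by
      rw [div_pow, ← sq_abs]
      nlinarith [Real.pi_le_four, abs_nonneg (arg v)]
    linarith
  have hsin_lo := Real.abs_sin_div_two_pi_le_abs_sin_div_four hθ
  have hsin_hi := Real.abs_sin_div_four_le hθ
  rw [hsin] at hsin_lo hsin_hi
  rw [hu_re, hu_im, abs_mul, abs_of_pos (by positivity : 0 < ρ)]
  refine ⟨by nlinarith, ?_, ?_⟩
  · calc ε / (4 * Real.pi) ≤ ε / ‖v‖ / (2 * Real.pi) := by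
          rw [div_div, show 4 * Real.pi = 2 * (2 * Real.pi) by ring]
          gcongr
      _ ≤ ρ * |Real.sin (arg v / 4)| := by nlinarith [abs_nonneg (Real.sin (arg v / 4))]
  · calc ρ * |Real.sin (arg v / 4)| ≤ 2 * (Real.pi / 8 * (ε / ‖v‖)) := by gcongr
      _ ≤ 2 * (Real.pi / 8 * ε) := by gcongr; exact div_le_self hε.le hnorm1
      _ = Real.pi / 4 * ε := by ring

lemma alphaWN_eq_ofReal_mul_cpow (β κ γ : ℝ) {ω : ℝ} (hω : 0 < ω) :
    alphaWN β κ γ ω =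
      (((β / κ) ^ ((1 : ℝ) / 4) * √ω : ℝ) : ℂ) * (1 - ((γ / β / ω : ℝ) : ℂ) * I) ^ (1 / 4 : ℂ) := by
  have hv0 : (1 - ((γ / β / ω : ℝ) : ℂ) * I) ≠ 0 := fun h => by
    simpa using congrArg re h
  have hw : (ω : ℂ) ^ 2 - I * ((γ : ℂ) / (β : ℂ)) * (ω : ℂ) =
      ((ω ^ 2 : ℝ) : ℂ) * (1 - ((γ / β / ω : ℝ) : ℂ) * I) := by
    have hω' : (ω : ℂ) ≠ 0 := ofReal_ne_zero.2 hω.ne'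
    push_cast
    field_simp
  have hsqrt : exp (1 / 4 * ((Real.log (ω ^ 2) : ℝ) : ℂ)) = ((√ω : ℝ) : ℂ) := by
    rw [Real.sqrt_eq_rpow, Real.rpow_def_of_pos hω, ofReal_exp, Real.log_pow]
    push_cast
    ring_nf
  rw [alphaWN, hw, log_ofReal_mul (by positivity) hv0, mul_add, exp_add, hsqrt,
    cpow_def_of_ne_zero hv0, mul_comm (log _), ofReal_mul, mul_assoc]

noncomputable def c2Coeff (z : ℂ) : ℂ :=
  cos z / (sinh z + sin z) -
    ((1 + cosh z * cos z + sinh z * sin z) / (2 + 2 * cosh z * cos z)) *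
    ((cosh z + cos z) / (sinh z + sin z))

theorem c2Coeff_bound {z : ℂ} (hy : |z.im| ≤ 1)
    (h : 2 * Real.cosh z.im ≤ Real.sinh z.re * |z.im|) :
    sinh z + sin z ≠ 0 ∧ 2 + 2 * cosh z * cos z ≠ 0 ∧
      ‖c2Coeff z‖ ≤ 1 + 16 * Real.cosh z.im / |z.im| := by
  set s := Real.sinh z.re
  set k := Real.cosh z.im
  set Y := |z.im|
  have hk : 1 ≤ k := Real.one_le_cosh _
  have hsY : 2 ≤ s * Y := by linarith
  have hY : 0 < Y := (abs_nonneg _).lt_of_ne fun h0 => by norm_num [Y, ← h0] at hsY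
  have hs : 2 * k ≤ s := by nlinarith
  have hx : 0 ≤ z.re := Real.sinh_nonneg_iff.1 (by linarith)
  have hcosh : Real.cosh z.re ≤ s + 1 := by
    linarith [Real.cosh_sub_sinh z.re, Real.exp_le_one_iff.2 (neg_nonpos.2 hx)]
  have hS : s / 2 ≤ ‖sinh z + sin z‖ := by
    have := abs_sinh_re_sub_cosh_im_le_norm_sinh_add_sin z
    rw [abs_of_nonneg (by linarith : 0 ≤ s)] at this
    linarith
  have hD : s * Y ≤ ‖2 + 2 * cosh z * cos z‖ := by
    have := abs_sinh_re_mul_abs_sinh_im_sub_one_le_norm_one_add_cosh_mul_cos z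
    rw [abs_of_nonneg (by linarith : 0 ≤ s), Real.abs_sinh] at this
    have hYs : Y ≤ Real.sinh Y := Real.self_le_sinh_iff.2 hY.le
    rw [show (2 : ℂ) + 2 * cosh z * cos z = 2 * (1 + cosh z * cos z) by ring, norm_mul,
      Complex.norm_two]
    nlinarith
  have hN : ‖1 + cosh z * cos z + sinh z * sin z‖ ≤ 4 * s * k := by
    nlinarith [norm_one_add_cosh_mul_cos_add_sinh_mul_sin_le z]
  have hP : ‖cosh z + cos z‖ ≤ 2 * s := by
    linarith [norm_add_le (cosh z) (cos z), norm_cosh_le_cosh_re z, norm_cos_le_cosh_im z]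
  refine ⟨norm_pos_iff.1 (by linarith), norm_pos_iff.1 (by nlinarith), ?_⟩
  calc ‖c2Coeff z‖
      ≤ ‖cos z‖ / ‖sinh z + sin z‖ + ‖1 + cosh z * cos z + sinh z * sin z‖ /
          ‖2 + 2 * cosh z * cos z‖ * (‖cosh z + cos z‖ / ‖sinh z + sin z‖) := by
        rw [← norm_div, ← norm_div, ← norm_div, ← norm_mul]
        exact norm_sub_le _ _
    _ ≤ k / (s / 2) + 4 * s * k / (s * Y) * (2 * s / (s / 2)) := by
        gcongr
        · linarith
        · exact norm_cos_le_cosh_im z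
        · linarith
    _ ≤ 1 + 16 * k / Y := by
        have hs0 : 0 < s := by linarith
        rw [show 4 * s * k / (s * Y) * (2 * s / (s / 2)) = 16 * k / Y by field_simp; ring]
        linarith [(div_le_one (by positivity : 0 < s / 2)).2 (by linarith : k ≤ s / 2)]

theorem c2Coeff_bound_of_eq_ofReal_mul_cpow {r ε : ℝ} {z : ℂ}
    (hz : z = r * (1 - ε * I) ^ (1 / 4 : ℂ)) (hr : 0 < r) (hε : 0 < ε) (hε1 : ε ≤ 1)
    (hsmall : Real.pi * r * ε ≤ 4) (hlarge : 128 * Real.pi * Real.cosh 1 ≤ r ^ 3 * ε) :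
    sinh z + sin z ≠ 0 ∧ 2 + 2 * cosh z * cos z ≠ 0 ∧
      ‖c2Coeff z‖ ≤ 1 + 64 * Real.pi * Real.cosh 1 / (r * ε) := by
  obtain ⟨hu_re, hu_im_lo, hu_im_hi⟩ := one_sub_mul_I_cpow_quarter_bounds hε hε1
  have hre : r / 2 ≤ z.re := by
    rw [hz, re_ofReal_mul]
    nlinarith
  have him : |z.im| = r * |((1 - ε * I) ^ (1 / 4 : ℂ)).im| := by
    rw [hz, im_ofReal_mul, abs_mul, abs_of_pos hr]
  have him_lo : r * ε / (4 * Real.pi) ≤ |z.im| := by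
    rw [him, mul_div_assoc]
    gcongr
  have him_hi : |z.im| ≤ 1 := by
    rw [him]
    calc r * _ ≤ r * (Real.pi / 4 * ε) := by gcongr
      _ ≤ 1 := by linarith
  have hcosh : Real.cosh z.im ≤ Real.cosh 1 := Real.cosh_le_cosh.2 (by rwa [abs_one])
  have hsinh : r ^ 2 / 16 ≤ Real.sinh z.re := by
    calc r ^ 2 / 16 = (r / 2) ^ 2 / 4 := by ring
      _ ≤ z.re ^ 2 / 4 := by gcongr
      _ ≤ Real.sinh z.re := Real.sq_div_four_le_sinh (by linarith)
  have hkey : 2 * Real.cosh z.im ≤ Real.sinh z.re * |z.im| := by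
    calc 2 * Real.cosh z.im ≤ r ^ 2 / 16 * (r * ε / (4 * Real.pi)) := by
          rw [show r ^ 2 / 16 * (r * ε / (4 * Real.pi)) = r ^ 3 * ε / (64 * Real.pi) by ring,
            le_div_iff₀ (by positivity)]
          nlinarith [Real.pi_pos]
      _ ≤ Real.sinh z.re * |z.im| := by
          gcongr
          exact (by positivity : 0 ≤ r ^ 2 / 16).trans hsinh
  obtain ⟨hS, hD, hC⟩ := c2Coeff_bound him_hi hkey
  refine ⟨hS, hD, hC.trans ?_⟩
  calc 1 + 16 * Real.cosh z.im / |z.im| ≤ 1 + 16 * Real.cosh 1 / (r * ε / (4 * Real.pi)) := by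
        gcongr
    _ = 1 + 64 * Real.pi * Real.cosh 1 / (r * ε) := by field_simp; ring

end

/-- For large `ω`, the denominators in `C_{2,ω}` are nonzero and `|C_{2,ω}| ≤ M√ω`. -/
theorem C2coef_bound (β κ γ : ℝ) (hβ : 0 < β) (hκ : 0 < κ) (hγ : 0 < γ) :
    ∃ ω₀ > (0:ℝ), ∃ M > (0:ℝ), ∀ ω : ℝ, ω₀ ≤ ω →
      Complex.sinh (alphaWN β κ γ ω) + Complex.sin (alphaWN β κ γ ω) ≠ 0 ∧
      2 + 2 * Complex.cosh (alphaWN β κ γ ω) * Complex.cos (alphaWN β κ γ ω) ≠ 0 ∧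
      ‖C2coef β κ γ ω‖ ≤ M * Real.sqrt ω := by
  set a := (β / κ) ^ ((1 : ℝ) / 4)
  set c := γ / β
  have ha : 0 < a := Real.rpow_pos_of_pos (div_pos hβ hκ) _
  have hc : 0 < c := div_pos hγ hβ
  have hev : ∀ᶠ ω in Filter.atTop, 1 ≤ ω ∧ c ≤ ω ∧ Real.pi * a * c / 4 ≤ √ω ∧
      128 * Real.pi * Real.cosh 1 / (a ^ 3 * c) ≤ √ω :=
    (Filter.eventually_ge_atTop 1).and <| (Filter.eventually_ge_atTop c).and <|
      (Real.tendsto_sqrt_atTop.eventually_ge_atTop _).and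
        (Real.tendsto_sqrt_atTop.eventually_ge_atTop _)
  obtain ⟨ω₀, hω₀⟩ := Filter.eventually_atTop.1 hev
  refine ⟨max ω₀ 1, by positivity, 1 + 64 * Real.pi * Real.cosh 1 / (a * c), by positivity,
    fun ω hω => ?_⟩
  obtain ⟨hω1, hcω, hsmall, hlarge⟩ := hω₀ ω (le_of_max_le_left hω)
  have hω0 : 0 < ω := by linarith
  have ht : 0 < √ω := Real.sqrt_pos.2 hω0
  have ht1 : 1 ≤ √ω := Real.one_le_sqrt.2 hω1
  have hrε : a * √ω * (c / ω) = a * c / √ω := by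
    rw [show a * √ω * (c / ω) = a * c * (√ω / ω) by ring, Real.sqrt_div_self', mul_one_div]
  have hr3ε : (a * √ω) ^ 3 * (c / ω) = a ^ 3 * c * √ω := by
    rw [mul_pow, show √ω ^ 3 = ω * √ω by rw [pow_succ, Real.sq_sqrt hω0.le]]
    field_simp
  obtain ⟨hS, hD, hC⟩ := c2Coeff_bound_of_eq_ofReal_mul_cpow (alphaWN_eq_ofReal_mul_cpow β κ γ hω0)
    (by positivity) (by positivity) ((div_le_one hω0).2 hcω)
    (by rw [mul_assoc, hrε, ← mul_div_assoc, div_le_iff₀ ht]; linarith)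
    (by rw [hr3ε]; rwa [div_le_iff₀' (by positivity)] at hlarge)
  refine ⟨hS, hD, hC.trans ?_⟩
  rw [hrε, div_div_eq_mul_div, add_mul, one_mul, mul_div_right_comm]
  gcongr
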